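/- arXiv:2305.04606 — 5 statements merged into one kernel-verified Lean document; each statement's English description precedes it below -/
import Mathlib

section
/- The star product of two Dual Berman codes satisfies B_n^{r1}(m) ⋆ B_n^{r2}(m) = B_n^{r1+r2}(m), for any integers n ≥ 2, m ≥ 1 and non-negative integers r1, r2 with r1 + r2 ≤ m. -/
open scoped BigOperators

/-- The `l`-th block (of length `n^m`) of a vector of length `n^(m+1)`,
where the first coordinate of the index tuple selects the block. -/
def blockAt (n m : ℕ) (l : Fin n) (v : (Fin (m + 1) → Fin n) → ZMod 2) :
    (Fin m → Fin n) → ZMod 2 :=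
  fun j => v (Fin.cons l j)

/-- Berman code `Ber_n^r(m) ⊆ F_2^{n^m}`, coordinates indexed by `H^m` with `H = Fin n`.
`Ber_n^m(m) = {0}`, `Ber_n^0(m)` is the single parity-check code, and for `1 ≤ r`,
a codeword is a concatenation `(v_0|…|v_{n-1})` with each block in `Ber_n^{r-1}(m-1)`
and the sum of the blocks in `Ber_n^r(m-1)`. -/
def Ber (n : ℕ) : ℕ → (m : ℕ) → Set ((Fin m → Fin n) → ZMod 2)
  | _, 0 => {0}
  | 0, (m + 1) => {c | ∑ i, c i = 0}
  | (r + 1), (m + 1) =>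
      {v | (∀ l : Fin n, blockAt n m l v ∈ Ber n r m) ∧
        (fun j => ∑ l : Fin n, v (Fin.cons l j)) ∈ Ber n (r + 1) m}

/-- Dual Berman code `B_n^r(m) ⊆ F_2^{n^m}`.
`B_n^m(m)` is the full space, `B_n^0(m)` is the repetition code, and for `1 ≤ r`,
a codeword is `(u+u_0|…|u+u_{n-2}|u)` with each `u_l ∈ B_n^{r-1}(m-1)` and `u ∈ B_n^r(m-1)`. -/
def DBer (n : ℕ) : ℕ → (m : ℕ) → Set ((Fin m → Fin n) → ZMod 2)
  | _, 0 => Set.univ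
  | 0, (m + 1) => {c | ∃ a : ZMod 2, c = fun _ => a}
  | (r + 1), (m + 1) =>
      {v | ∃ u ∈ DBer n (r + 1) m, ∃ w : Fin n → ((Fin m → Fin n) → ZMod 2),
        (∀ l, w l ∈ DBer n r m) ∧
        (∀ l : Fin n, blockAt n m l v = if l.val = n - 1 then u else u + w l)}

/-- Star product of two codes: the span of all coordinatewise products. -/
def starProd {ι : Type*} (C D : Set (ι → ZMod 2)) : Submodule (ZMod 2) (ι → ZMod 2) :=
  Submodule.span (ZMod 2) {x | ∃ c ∈ C, ∃ d ∈ D, x = c * d}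

/-- Dual code w.r.t. the standard bilinear form. -/
def dualCode {ι : Type*} [Fintype ι] (C : Set (ι → ZMod 2)) : Set (ι → ZMod 2) :=
  {x | ∀ c ∈ C, ∑ i, x i * c i = 0}

/-- Partial order on tuples: `j ⪯ i` iff `supp(j) ⊆ supp(i)` and `j` agrees with `i` on
`supp(j)`. -/
def preceq {n m : ℕ} (j i : Fin m → Fin n) : Prop :=
  ∀ s, (j s).val ≠ 0 → j s = i s

instance {n m : ℕ} (j i : Fin m → Fin n) : Decidable (preceq j i) := by
  unfold preceq; infer_instance

/-- Hamming weight of a tuple in `H^m`: the number of nonzero entries. -/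
def tupleWt {n m : ℕ} (j : Fin m → Fin n) : ℕ :=
  (Finset.univ.filter fun s => (j s).val ≠ 0).card

/-- The vector `c_m(i')`, the indicator of `{i : i ⪯ i'}`. -/
def cm {n m : ℕ} (i' : Fin m → Fin n) : (Fin m → Fin n) → ZMod 2 :=
  fun i => if preceq i i' then 1 else 0

/-- The vector `d_m(i')`, the indicator of `{i : i ⪰ i'}`. -/
def dm {n m : ℕ} (i' : Fin m → Fin n) : (Fin m → Fin n) → ZMod 2 :=
  fun i => if preceq i' i then 1 else 0

/-- Standard basis vector of `F_2^{n^m}` at coordinate `v`. -/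
def eVec {n m : ℕ} (v : Fin m → Fin n) : (Fin m → Fin n) → ZMod 2 :=
  fun i => if i = v then 1 else 0

/-!
Both sides are spans of the same kind of generators. By induction on `m`, following the block
recursion, `B_n^r(m)` is the span of the up-set indicators `dm i` with `tupleWt i ≤ r`: the last
block of a codeword lies in the level-`r` span of length `n^(m-1)`, and the differences of blocks
lie in the level-`(r-1)` span. For generators, `dm a * dm b` is `dm` of the coordinatewise join of
`a` and `b` when they agree on their common support (and `0` otherwise), and the join has weight at
most `tupleWt a + tupleWt b`; conversely, a tuple of weight at most `r₁ + r₂` splits into two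
disjointly supported tuples of weights at most `r₁` and `r₂`.
-/

lemma exists_eq_ite_add_iff {ι M : Type*} [AddCommGroup M] {P Q : Set M} (hQ : (0 : M) ∈ Q)
    {p : ι → Prop} [DecidablePred p] {i₀ : ι} (hi₀ : ∀ i, p i ↔ i = i₀) (f : ι → M) :
    (∃ u ∈ P, ∃ w : ι → M, (∀ i, w i ∈ Q) ∧ ∀ i, f i = if p i then u else u + w i) ↔
      f i₀ ∈ P ∧ ∀ i, f i - f i₀ ∈ Q := by
  constructor
  · rintro ⟨u, hu, w, hw, hf⟩
    have hfi₀ : f i₀ = u := by simpa [(hi₀ i₀).2 rfl] using hf i₀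
    refine ⟨hfi₀ ▸ hu, fun i => ?_⟩
    by_cases hi : p i
    · simpa [(hi₀ i).1 hi] using hQ
    · simpa [hf i, hi, hfi₀] using hw i
  · rintro ⟨h₀, h⟩
    refine ⟨f i₀, h₀, fun i => f i - f i₀, h, fun i => ?_⟩
    by_cases hi : p i
    · simp [(hi₀ i).1 hi]
    · simp [hi]

lemma starProd_eq_mul {ι : Type*} (P Q : Submodule (ZMod 2) (ι → ZMod 2)) :
    starProd (P : Set (ι → ZMod 2)) Q = P * Q := by
  rw [Submodule.mul_eq_span_mul_set, starProd]
  congr 1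
  ext x
  simp [Set.mem_mul, eq_comm]

section Tuples

variable {n m : ℕ}

lemma preceq_cons_iff {l₀ : Fin n} {j₀ : Fin m → Fin n} {i : Fin (m + 1) → Fin n} :
    preceq (Fin.cons l₀ j₀) i ↔ (l₀.val ≠ 0 → l₀ = i 0) ∧ preceq j₀ (Fin.tail i) := by
  simp only [preceq, Fin.forall_fin_succ, Fin.cons_zero, Fin.cons_succ, Fin.tail]

lemma tupleWt_cons (l : Fin n) (j : Fin m → Fin n) :
    tupleWt (Fin.cons l j : Fin (m + 1) → Fin n) = (if l.val ≠ 0 then 1 else 0) + tupleWt j := by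
  rw [tupleWt, tupleWt, Finset.card_filter, Finset.card_filter, Fin.sum_univ_succ]
  simp only [Fin.cons_zero, Fin.cons_succ]

lemma tupleWt_eq_zero_iff [NeZero n] {i : Fin m → Fin n} : tupleWt i = 0 ↔ i = 0 := by
  rw [tupleWt, Finset.card_eq_zero, Finset.filter_eq_empty_iff, funext_iff]
  simp only [Finset.mem_univ, true_implies, not_not, Pi.zero_apply, Fin.ext_iff, Fin.val_zero]

def TupleCompatible (a b : Fin m → Fin n) : Prop :=
  ∀ s, (a s).val ≠ 0 → (b s).val ≠ 0 → a s = b s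

def tupleJoin (a b : Fin m → Fin n) : Fin m → Fin n :=
  fun s => if (a s).val ≠ 0 then a s else b s

lemma preceq_tupleJoin_iff {a b : Fin m → Fin n} (h : TupleCompatible a b) (i : Fin m → Fin n) :
    preceq (tupleJoin a b) i ↔ preceq a i ∧ preceq b i := by
  simp only [preceq, tupleJoin]
  constructor
  · intro hj
    refine ⟨fun s ha => by simpa [ha] using hj s, fun s hb => ?_⟩
    by_cases ha : (a s).val = 0
    · simpa [ha, hb] using hj s
    · rw [← h s ha hb]; simpa [ha] using hj s
  · rintro ⟨ha, hb⟩ s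
    by_cases h0 : (a s).val = 0
    · simpa [h0] using hb s
    · simpa [h0] using ha s h0

lemma tupleWt_tupleJoin_le (a b : Fin m → Fin n) :
    tupleWt (tupleJoin a b) ≤ tupleWt a + tupleWt b := by
  refine (Finset.card_le_card fun s hs => ?_).trans (Finset.card_union_le _ _)
  by_cases ha : (a s).val = 0 <;> simp_all [tupleJoin]

lemma exists_tupleJoin_eq [NeZero n] {i : Fin m → Fin n} {r₁ r₂ : ℕ}
    (h : tupleWt i ≤ r₁ + r₂) :
    ∃ a b, tupleWt a ≤ r₁ ∧ tupleWt b ≤ r₂ ∧ TupleCompatible a b ∧ tupleJoin a b = i := by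
  set S := Finset.univ.filter fun s => (i s).val ≠ 0 with hS
  obtain ⟨T, hTS, hT⟩ := Finset.exists_subset_card_eq (min_le_right r₁ S.card)
  have hTi : ∀ s ∈ T, (i s).val ≠ 0 := fun s hs => (Finset.mem_filter.1 (hTS hs)).2
  refine ⟨T.piecewise i 0, T.piecewise 0 i, ?_, ?_, ?_, ?_⟩
  · have : (Finset.univ.filter fun s => (T.piecewise i 0 s).val ≠ 0) = T := by
      ext s
      by_cases hs : s ∈ T
      · simpa [hs] using hTi s hs
      · simp [hs]
    rw [tupleWt, this, hT]
    exact min_le_left _ _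
  · have : (Finset.univ.filter fun s => (T.piecewise 0 i s).val ≠ 0) = S \ T := by
      ext s; by_cases hs : s ∈ T <;> simp [hs, hS]
    rw [tupleWt, this, Finset.card_sdiff_of_subset hTS, hT]
    change S.card ≤ r₁ + r₂ at h
    omega
  · intro s ha hb
    by_cases hs : s ∈ T <;> simp_all
  · funext s
    by_cases hs : s ∈ T <;> simp [tupleJoin, hs, hTi]

lemma dm_mul_dm_of_compatible {a b : Fin m → Fin n} (h : TupleCompatible a b) :
    dm a * dm b = dm (tupleJoin a b) := by
  funext i
  simp only [Pi.mul_apply, dm, ite_zero_mul_ite_zero, mul_one, preceq_tupleJoin_iff h]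

lemma dm_mul_dm_of_not_compatible {a b : Fin m → Fin n} (h : ¬ TupleCompatible a b) :
    dm a * dm b = 0 := by
  obtain ⟨s, ha, hb, hne⟩ : ∃ s, (a s).val ≠ 0 ∧ (b s).val ≠ 0 ∧ a s ≠ b s := by
    simpa [TupleCompatible] using h
  funext i
  simp only [Pi.mul_apply, dm, ite_zero_mul_ite_zero, Pi.zero_apply, ite_eq_right_iff]
  exact fun ⟨hai, hbi⟩ => absurd ((hai s ha).trans (hbi s hb).symm) hne

lemma dm_zero [NeZero n] : dm (0 : Fin m → Fin n) = 1 := by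
  funext i
  simp [dm, preceq]

end Tuples

def dmSpan (n m r : ℕ) : Submodule (ZMod 2) ((Fin m → Fin n) → ZMod 2) :=
  Submodule.span (ZMod 2) {x | ∃ i, tupleWt i ≤ r ∧ x = dm i}

section DmSpan

variable {n m : ℕ}

lemma dm_mem_dmSpan {i : Fin m → Fin n} {r : ℕ} (h : tupleWt i ≤ r) : dm i ∈ dmSpan n m r :=
  Submodule.subset_span ⟨i, h, rfl⟩

lemma dmSpan_mono : Monotone (dmSpan n m) :=
  fun _ _ h => Submodule.span_mono fun _ ⟨i, hi, hx⟩ => ⟨i, hi.trans h, hx⟩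

lemma dm_mul_dm_mem_dmSpan {a b : Fin m → Fin n} {r₁ r₂ : ℕ}
    (ha : tupleWt a ≤ r₁) (hb : tupleWt b ≤ r₂) : dm a * dm b ∈ dmSpan n m (r₁ + r₂) := by
  by_cases h : TupleCompatible a b
  · rw [dm_mul_dm_of_compatible h]
    exact dm_mem_dmSpan ((tupleWt_tupleJoin_le a b).trans (add_le_add ha hb))
  · rw [dm_mul_dm_of_not_compatible h]
    exact zero_mem _

lemma dmSpan_mul [NeZero n] (r₁ r₂ : ℕ) :
    dmSpan n m r₁ * dmSpan n m r₂ = dmSpan n m (r₁ + r₂) := by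
  rw [dmSpan, dmSpan, Submodule.span_mul_span]
  apply le_antisymm
  · rw [Submodule.span_le]
    rintro _ ⟨_, ⟨a, ha, rfl⟩, _, ⟨b, hb, rfl⟩, rfl⟩
    exact dm_mul_dm_mem_dmSpan ha hb
  · rw [dmSpan, Submodule.span_le]
    rintro _ ⟨i, hi, rfl⟩
    obtain ⟨a, b, ha, hb, hab, rfl⟩ := exists_tupleJoin_eq hi
    rw [← dm_mul_dm_of_compatible hab]
    exact Submodule.subset_span (Set.mul_mem_mul ⟨a, ha, rfl⟩ ⟨b, hb, rfl⟩)

lemma dmSpan_zero [NeZero n] : dmSpan n m 0 = ZMod 2 ∙ 1 := by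
  have : {x | ∃ i : Fin m → Fin n, tupleWt i ≤ 0 ∧ x = dm i} = {1} := by
    ext x
    simp [tupleWt_eq_zero_iff, dm_zero]
  rw [dmSpan, this]

lemma one_mem_dmSpan [NeZero n] (r : ℕ) : (1 : (Fin m → Fin n) → ZMod 2) ∈ dmSpan n m r :=
  dmSpan_mono (Nat.zero_le r) (dmSpan_zero (n := n) ▸ Submodule.mem_span_singleton_self 1)

lemma dmSpan_zero_dim_eq_top [NeZero n] (r : ℕ) : dmSpan n 0 r = ⊤ := by
  refine eq_top_iff.2 fun x _ => ?_
  have : x = x default • 1 := by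
    funext i
    simp [Subsingleton.elim i default]
  rw [this]
  exact Submodule.smul_mem _ _ (one_mem_dmSpan r)

end DmSpan

section Blocks

variable {n m : ℕ}

def repeatBlock (x : (Fin m → Fin n) → ZMod 2) : (Fin (m + 1) → Fin n) → ZMod 2 :=
  fun i => x (Fin.tail i)

def blockIndicator (l : Fin n) : (Fin (m + 1) → Fin n) → ZMod 2 :=
  fun i => if i 0 = l then 1 else 0

lemma blockAt_dm_cons (l l₀ : Fin n) (j : Fin m → Fin n) :
    blockAt n m l (dm (Fin.cons l₀ j)) = if l₀.val = 0 ∨ l₀ = l then dm j else 0 := by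
  have hc : (l₀.val ≠ 0 → l₀ = l) ↔ (l₀.val = 0 ∨ l₀ = l) := by tauto
  funext j'
  by_cases h : l₀.val = 0 ∨ l₀ = l <;> simp [blockAt, dm, preceq_cons_iff, hc, h]

lemma repeatBlock_dm [NeZero n] (j : Fin m → Fin n) :
    repeatBlock (dm j) = dm (Fin.cons 0 j) := by
  funext i
  simp [repeatBlock, dm, preceq_cons_iff]

lemma repeatBlock_mem_dmSpan [NeZero n] {x : (Fin m → Fin n) → ZMod 2} {r : ℕ}
    (hx : x ∈ dmSpan n m r) : repeatBlock x ∈ dmSpan n (m + 1) r := by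
  refine (Submodule.map_span_le (LinearMap.funLeft (ZMod 2) (ZMod 2) Fin.tail) _ _).2 ?_
    (Submodule.mem_map_of_mem hx)
  rintro _ ⟨j, hj, rfl⟩
  change repeatBlock (dm j) ∈ _
  rw [repeatBlock_dm]
  exact dm_mem_dmSpan (by simpa [tupleWt_cons] using hj)

lemma blockIndicator_eq_dm [NeZero n] {l : Fin n} (hl : l.val ≠ 0) :
    blockIndicator (m := m) l = dm (Fin.cons l 0) := by
  funext i
  simp only [blockIndicator, dm, preceq_cons_iff]
  simp [hl, preceq, eq_comm]

lemma sum_blockIndicator : ∑ l : Fin n, blockIndicator (m := m) l = 1 := by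
  funext i
  simp [Finset.sum_apply, blockIndicator]

lemma blockIndicator_mem_dmSpan [NeZero n] (l : Fin n) :
    blockIndicator (m := m) l ∈ dmSpan n (m + 1) 1 := by
  have hne : ∀ l : Fin n, l ≠ 0 → blockIndicator (m := m) l ∈ dmSpan n (m + 1) 1 := by
    intro l hl
    rw [blockIndicator_eq_dm (Fin.val_ne_zero_iff.2 hl)]
    exact dm_mem_dmSpan (by simp [tupleWt_cons, hl, tupleWt_eq_zero_iff])
  by_cases hl : l = 0
  · have hsum := sum_blockIndicator (n := n) (m := m)
    rw [← Finset.add_sum_erase _ _ (Finset.mem_univ 0)] at hsum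
    rw [hl, eq_sub_of_add_eq hsum]
    exact sub_mem (one_mem_dmSpan 1) (sum_mem fun l hl => hne l (Finset.ne_of_mem_erase hl))
  · exact hne l hl

lemma eq_repeatBlock_add_sum_blockIndicator_mul (v : (Fin (m + 1) → Fin n) → ZMod 2)
    (u : (Fin m → Fin n) → ZMod 2) :
    v = repeatBlock u + ∑ l, blockIndicator l * repeatBlock (blockAt n m l v - u) := by
  funext i
  simp [Finset.sum_apply, repeatBlock, blockIndicator, blockAt, Fin.cons_self_tail]

end Blocks

section Recursion

variable {n m : ℕ}

lemma blockAt_dm_mem_dmSpan {l₀ l₁ : Fin n} {j : Fin m → Fin n} {r : ℕ}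
    (h : tupleWt (Fin.cons l₁ j : Fin (m + 1) → Fin n) ≤ r + 1) :
    blockAt n m l₀ (dm (Fin.cons l₁ j)) ∈ dmSpan n m (r + 1) ∧
      ∀ l, blockAt n m l (dm (Fin.cons l₁ j)) - blockAt n m l₀ (dm (Fin.cons l₁ j)) ∈
        dmSpan n m r := by
  rw [tupleWt_cons] at h
  by_cases hl₁ : l₁.val = 0
  · simp only [blockAt_dm_cons, hl₁, true_or, if_true, sub_self, zero_mem, implies_true,
      and_true]
    exact dm_mem_dmSpan (by simpa [hl₁] using h)
  · have hblock : ∀ l, blockAt n m l (dm (Fin.cons l₁ j)) ∈ dmSpan n m r := by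
      intro l
      rw [blockAt_dm_cons]
      split_ifs
      · exact dm_mem_dmSpan (by simp [hl₁] at h; omega)
      · exact zero_mem _
    exact ⟨dmSpan_mono r.le_succ (hblock l₀), fun l => sub_mem (hblock l) (hblock l₀)⟩

lemma mem_dmSpan_succ_succ_iff [NeZero n] (l₀ : Fin n) {r : ℕ}
    {v : (Fin (m + 1) → Fin n) → ZMod 2} :
    v ∈ dmSpan n (m + 1) (r + 1) ↔ blockAt n m l₀ v ∈ dmSpan n m (r + 1) ∧
      ∀ l, blockAt n m l v - blockAt n m l₀ v ∈ dmSpan n m r := by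
  constructor
  · intro hv
    let block (l : Fin n) :
        ((Fin (m + 1) → Fin n) → ZMod 2) →ₗ[ZMod 2] ((Fin m → Fin n) → ZMod 2) :=
      LinearMap.funLeft (ZMod 2) (ZMod 2) (Fin.cons (α := fun _ => Fin n) l)
    suffices dmSpan n (m + 1) (r + 1) ≤ (dmSpan n m (r + 1)).comap (block l₀) ⊓
        ⨅ l, (dmSpan n m r).comap (block l - block l₀) by
      have hS := this hv
      simp only [Submodule.mem_inf, Submodule.mem_iInf, Submodule.mem_comap,
        LinearMap.sub_apply] at hS
      exact hS
    rw [dmSpan, Submodule.span_le]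
    rintro _ ⟨i, hi, rfl⟩
    rw [← Fin.cons_self_tail i] at hi ⊢
    simp only [SetLike.mem_coe, Submodule.mem_inf, Submodule.mem_iInf, Submodule.mem_comap,
      LinearMap.sub_apply]
    exact blockAt_dm_mem_dmSpan hi
  · rintro ⟨h₀, h⟩
    rw [eq_repeatBlock_add_sum_blockIndicator_mul v (blockAt n m l₀ v)]
    refine add_mem (repeatBlock_mem_dmSpan h₀) (sum_mem fun l _ => ?_)
    rw [add_comm r, ← dmSpan_mul]
    exact Submodule.mul_mem_mul (blockIndicator_mem_dmSpan l) (repeatBlock_mem_dmSpan (h l))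

end Recursion

theorem DBer_eq_dmSpan {n : ℕ} [NeZero n] : ∀ m r, DBer n r m = dmSpan n m r
  | 0, r => by cases r <;> simp [DBer, dmSpan_zero_dim_eq_top]
  | m + 1, 0 => by
    ext c
    simp [DBer, dmSpan_zero, Submodule.mem_span_singleton, eq_comm, funext_iff]
  | m + 1, r + 1 => by
    ext v
    have hlast : ∀ l : Fin n, l.val = n - 1 ↔ l = ⟨n - 1, Nat.sub_one_lt (NeZero.ne n)⟩ :=
      fun l => by rw [Fin.ext_iff]
    rw [DBer, SetLike.mem_coe, mem_dmSpan_succ_succ_iff _,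
      DBer_eq_dmSpan m (r + 1), DBer_eq_dmSpan m r]
    exact exists_eq_ite_add_iff (zero_mem _) hlast (fun l => blockAt n m l v)

theorem stmt0_general (n m r1 r2 : ℕ) (hn : 2 ≤ n) :
    (starProd (DBer n r1 m) (DBer n r2 m) : Set ((Fin m → Fin n) → ZMod 2)) =
      DBer n (r1 + r2) m := by
  have : NeZero n := ⟨by omega⟩
  rw [DBer_eq_dmSpan, DBer_eq_dmSpan, DBer_eq_dmSpan, starProd_eq_mul, dmSpan_mul]

/-- `B_n^{r1}(m) ⋆ B_n^{r2}(m) = B_n^{r1+r2}(m)` for `n ≥ 2`, `m ≥ 1`,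
`r1 + r2 ≤ m`. -/
theorem stmt0 (n m r1 r2 : ℕ) (hn : 2 ≤ n) (hm : 1 ≤ m) (h : r1 + r2 ≤ m) :
    (starProd (DBer n r1 m) (DBer n r2 m) : Set ((Fin m → Fin n) → ZMod 2)) =
      DBer n (r1 + r2) m :=
  stmt0_general n m r1 r2 hn
end

section
/- For n ≥ 3 and non-negative integers r1, r2 ≤ m, the star product of two Berman codes satisfies Ber_n^{r1}(m) ⋆ Ber_n^{r2}(m) = F_2^{n^m} if r1, r2 ≤ m−1, and Ber_n^{r1}(m) ⋆ Ber_n^{r2}(m) = {0} if r1 = m or r2 = m. -/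
open scoped BigOperators

lemma zero_mem_Ber (n : ℕ) : ∀ (m r : ℕ), (0 : (Fin m → Fin n) → ZMod 2) ∈ Ber n r m := by
  intro m
  induction m with
  | zero => intro r; simp [Ber]
  | succ m ih =>
    intro r
    cases r with
    | zero => simp [Ber]
    | succ r =>
      refine ⟨fun l => ?_, ?_⟩
      · have h : blockAt n m l (0 : (Fin (m+1) → Fin n) → ZMod 2) = 0 := rfl
        rw [h]; exact ih r
      · have h : (fun j => ∑ l : Fin n, (0 : (Fin (m+1) → Fin n) → ZMod 2) (Fin.cons l j))
            = (0 : (Fin m → Fin n) → ZMod 2) := by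
          funext j; simp
        rw [h]; exact ih (r+1)

lemma Ber_sub_zero (n : ℕ) : ∀ (m r : ℕ), m ≤ r →
    ∀ v ∈ Ber n r m, v = 0 := by
  intro m
  induction m with
  | zero => intro r _ v hv; simpa [Ber] using hv
  | succ m ih =>
    intro r hr v hv
    obtain ⟨r, rfl⟩ : ∃ r', r = r' + 1 := ⟨r - 1, by omega⟩
    obtain ⟨hb, _⟩ := hv
    funext i
    have h0 : blockAt n m (i 0) v = 0 := ih r (by omega) _ (hb (i 0))
    have h : v i = blockAt n m (i 0) v (Fin.tail i) := by
      unfold blockAt; rw [Fin.cons_self_tail]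
    rw [h, h0]; rfl

lemma cm_mem_Ber (n : ℕ) (hn : 3 ≤ n) : ∀ (m r : ℕ) (a : Fin m → Fin n),
    r < m → (∀ s, (a s).val ≠ 0) → cm a ∈ Ber n r m := by
  have hz0 : (0 : ℕ) < n := by omega
  set z : Fin n := ⟨0, hz0⟩ with hzdef
  intro m
  induction m with
  | zero => intro r a hr; omega
  | succ m ih =>
    intro r a hr ha
    set a' : Fin m → Fin n := fun t => a t.succ with ha'
    have ha'supp : ∀ s, (a' s).val ≠ 0 := fun s => ha s.succ
    have ha0 : (a 0).val ≠ 0 := ha 0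
    have hne : a 0 ≠ z := fun h => ha0 (by rw [h])
    have hblock : ∀ (l : Fin n) (j : Fin m → Fin n),
        cm a (Fin.cons l j) = (if l.val = 0 ∨ l = a 0 then cm a' j else 0) := by
      intro l j
      have hiff : preceq (Fin.cons l j) a ↔ ((l.val = 0 ∨ l = a 0) ∧ preceq j a') := by
        constructor
        · intro h
          constructor
          · by_cases hl : l.val = 0
            · exact Or.inl hl
            · refine Or.inr ?_
              have := h 0 (by rwa [Fin.cons_zero])
              rwa [Fin.cons_zero] at this
          · intro t ht
            have := h t.succ (by rwa [Fin.cons_succ])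
            rwa [Fin.cons_succ] at this
        · rintro ⟨hl, ht⟩ s
          refine Fin.cases ?_ ?_ s
          · intro hs
            rw [Fin.cons_zero] at hs ⊢
            rcases hl with hl | hl
            · exact absurd hl hs
            · exact hl
          · intro t hs
            rw [Fin.cons_succ] at hs ⊢
            exact ht t hs
      by_cases hc : l.val = 0 ∨ l = a 0
      · simp only [cm, hc, if_true]
        by_cases hj : preceq j a'
        · rw [if_pos (hiff.2 ⟨hc, hj⟩), if_pos hj]
        · rw [if_neg (fun h => hj (hiff.1 h).2), if_neg hj]
      · simp only [cm, hc, if_false]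
        rw [if_neg (fun h => hc (hiff.1 h).1)]
    have hsplit : ∀ (l : Fin n) (X : ZMod 2), (if l.val = 0 ∨ l = a 0 then X else 0)
        = (if l = z then X else 0) + (if l = a 0 then X else 0) := by
      intro l X
      by_cases h1 : l = z
      · rw [if_pos (Or.inl (by rw [h1])), if_pos h1,
          if_neg (by rw [h1]; exact fun h => hne h.symm), add_zero]
      · by_cases h2 : l = a 0
        · rw [if_pos (Or.inr h2), if_neg h1, if_pos h2, zero_add]
        · rw [if_neg ?_, if_neg h1, if_neg h2, add_zero]
          rintro (h | h)
          · exact h1 (Fin.ext h)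
          · exact h2 h
    cases r with
    | zero =>
      show ∑ i, cm a i = 0
      have key : ∀ i : Fin (m+1) → Fin n,
          cm a i = ∏ s : Fin (m+1), (if (i s).val = 0 ∨ i s = a s then (1 : ZMod 2) else 0) := by
        intro i
        by_cases h : preceq i a
        · rw [cm, if_pos h, eq_comm]
          apply Finset.prod_eq_one
          intro s _
          rcases eq_or_ne ((i s).val) 0 with h0 | h0
          · simp [h0]
          · simp [h s h0]
        · rw [cm, if_neg h, eq_comm]
          rw [preceq] at h
          push_neg at h
          obtain ⟨s, hs1, hs2⟩ := h
          exact Finset.prod_eq_zero (Finset.mem_univ s) (by simp [hs1, hs2])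
      calc ∑ i, cm a i
          = ∑ i : Fin (m+1) → Fin n, ∏ s, (if (i s).val = 0 ∨ i s = a s then (1 : ZMod 2) else 0) :=
            Finset.sum_congr rfl fun i _ => key i
        _ = ∏ s : Fin (m+1), ∑ x : Fin n, (if x.val = 0 ∨ x = a s then (1 : ZMod 2) else 0) := by
            rw [Finset.prod_univ_sum]
            simp
        _ = 0 := by
            apply Finset.prod_eq_zero (Finset.mem_univ 0)
            have hsplit0 : ∀ x : Fin n, (if x.val = 0 ∨ x = a 0 then (1 : ZMod 2) else 0)
                = (if x = z then (1:ZMod 2) else 0) + (if x = a 0 then (1:ZMod 2) else 0) :=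
              fun x => hsplit x 1
            rw [Finset.sum_congr rfl fun x _ => hsplit0 x, Finset.sum_add_distrib,
              Finset.sum_ite_eq' Finset.univ, Finset.sum_ite_eq' Finset.univ]
            simp only [Finset.mem_univ, if_true]
            decide
    | succ r =>
      refine ⟨fun l => ?_, ?_⟩
      · have h : blockAt n m l (cm a) = (if l.val = 0 ∨ l = a 0 then cm a' else 0) := by
          funext j
          rw [blockAt, hblock l j]
          split <;> rfl
        rw [h]
        split
        · exact ih r a' (by omega) ha'supp
        · exact zero_mem_Ber n m r
      · have h : (fun j => ∑ l : Fin n, cm a (Fin.cons l j)) = (0 : (Fin m → Fin n) → ZMod 2) := by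
          funext j
          show ∑ l : Fin n, cm a (Fin.cons l j) = 0
          rw [Finset.sum_congr rfl fun l _ => hblock l j,
            Finset.sum_congr rfl fun l _ => hsplit l (cm a' j), Finset.sum_add_distrib,
            Finset.sum_ite_eq' Finset.univ, Finset.sum_ite_eq' Finset.univ]
          simp only [Finset.mem_univ, if_true]
          exact CharTwo.add_self_eq_zero _
        rw [h]
        exact zero_mem_Ber n m (r+1)

lemma tupleWt_lt {n m : ℕ} {i v : Fin m → Fin n} (h : preceq i v) (hne : i ≠ v) :
    tupleWt i < tupleWt v := by
  apply Finset.card_lt_card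
  rw [Finset.ssubset_iff_subset_ne]
  constructor
  · intro s hs
    simp only [Finset.mem_filter, Finset.mem_univ, true_and] at hs ⊢
    intro hv
    exact hs (by rw [h s hs, hv])
  · intro heq
    apply hne
    funext s
    by_cases hs : (i s).val ≠ 0
    · exact h s hs
    · push_neg at hs
      have hv : (v s).val = 0 := by
        by_contra hvne
        have hmem : s ∈ Finset.univ.filter (fun t => (i t).val ≠ 0) := by
          rw [heq]
          exact Finset.mem_filter.2 ⟨Finset.mem_univ _, hvne⟩
        exact (Finset.mem_filter.1 hmem).2 hs
      exact Fin.ext (by rw [hs, hv])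

lemma eVec_mem {n m : ℕ} (P : Submodule (ZMod 2) ((Fin m → Fin n) → ZMod 2))
    (H : ∀ c : Fin m → Fin n, cm c ∈ P) : ∀ v, eVec v ∈ P := by
  have key : ∀ (k : ℕ) (v : Fin m → Fin n), tupleWt v < k → eVec v ∈ P := by
    intro k
    induction k with
    | zero => intro v hv; omega
    | succ k ih =>
      intro v hv
      set T := Finset.univ.filter (fun i : Fin m → Fin n => preceq i v) with hT
      have hvT : v ∈ T := Finset.mem_filter.2 ⟨Finset.mem_univ _, fun s _ => rfl⟩
      have hsum : cm v = ∑ i ∈ T, eVec i := by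
        funext j
        rw [Finset.sum_apply]
        have hcongr : ∀ i ∈ T, eVec i j = if j = i then (1 : ZMod 2) else 0 := fun i _ => rfl
        rw [Finset.sum_congr rfl hcongr, Finset.sum_ite_eq T j (fun _ => (1 : ZMod 2))]
        simp only [hT, Finset.mem_filter, Finset.mem_univ, true_and]
        rfl
      have hev : eVec v = cm v - ∑ i ∈ T.erase v, eVec i := by
        rw [hsum, ← Finset.sum_erase_add T _ hvT, add_sub_cancel_left]
      rw [hev]
      refine Submodule.sub_mem _ (H v) (Submodule.sum_mem _ fun i hi => ?_)
      have hi' := Finset.mem_erase.1 hi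
      have hlt := tupleWt_lt (Finset.mem_filter.1 hi'.2).2 hi'.1
      exact ih i (by omega)
  exact fun v => key (tupleWt v + 1) v (Nat.lt_succ_self _)


/-- for `n ≥ 3` and `r1, r2 ≤ m`, the star product of two Berman codes is the
full space provided `r1, r2 ≤ m - 1`, and is `{0}` if `r1 = m` or `r2 = m`. -/
theorem stmt2 (n m r1 r2 : ℕ) (hn : 3 ≤ n) (h1 : r1 ≤ m) (h2 : r2 ≤ m) :
    (r1 < m → r2 < m →
      (starProd (Ber n r1 m) (Ber n r2 m) : Set ((Fin m → Fin n) → ZMod 2)) = Set.univ) ∧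
    ((r1 = m ∨ r2 = m) →
      (starProd (Ber n r1 m) (Ber n r2 m) : Set ((Fin m → Fin n) → ZMod 2)) = {0}) := by
  constructor
  · intro hr1 hr2
    have hcm : ∀ c : Fin m → Fin n, cm c ∈ starProd (Ber n r1 m) (Ber n r2 m) := by
      intro c
      set a : Fin m → Fin n := fun s => if (c s).val ≠ 0 then c s else ⟨1, by omega⟩ with hadef
      set b : Fin m → Fin n := fun s => if (c s).val ≠ 0 then c s else ⟨2, by omega⟩ with hbdef
      have hasupp : ∀ s, (a s).val ≠ 0 := by
        intro s
        rw [hadef]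
        by_cases h : (c s).val ≠ 0 <;> simp [h]
      have hbsupp : ∀ s, (b s).val ≠ 0 := by
        intro s
        rw [hbdef]
        by_cases h : (c s).val ≠ 0 <;> simp [h]
      have hiff : ∀ i : Fin m → Fin n, preceq i c ↔ (preceq i a ∧ preceq i b) := by
        intro i
        constructor
        · intro h
          constructor
          · intro s hs
            have hc := h s hs
            have hcs : (c s).val ≠ 0 := by rw [← hc]; exact hs
            show i s = a s
            simp only [hadef, hcs, ne_eq, not_false_eq_true, if_true]
            exact hc
          · intro s hs
            have hc := h s hs
            have hcs : (c s).val ≠ 0 := by rw [← hc]; exact hs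
            show i s = b s
            simp only [hbdef, hcs, ne_eq, not_false_eq_true, if_true]
            exact hc
        · rintro ⟨hA, hB⟩ s hs
          have hAs := hA s hs
          have hBs := hB s hs
          by_cases hcs : (c s).val ≠ 0
          · rw [hAs, hadef]; simp [hcs]
          · exfalso
            have h1' : a s = (⟨1, by omega⟩ : Fin n) := by rw [hadef]; simp [hcs]
            have h2' : b s = (⟨2, by omega⟩ : Fin n) := by rw [hbdef]; simp [hcs]
            rw [h1'] at hAs
            rw [h2'] at hBs
            have : (⟨1, by omega⟩ : Fin n) = (⟨2, by omega⟩ : Fin n) := by rw [← hAs, ← hBs]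
            simp at this
      have hprod : cm c = cm a * cm b := by
        funext i
        show (if preceq i c then (1:ZMod 2) else 0)
            = (if preceq i a then (1:ZMod 2) else 0) * (if preceq i b then (1:ZMod 2) else 0)
        by_cases h : preceq i c
        · rw [if_pos h, if_pos ((hiff i).1 h).1, if_pos ((hiff i).1 h).2, mul_one]
        · rw [if_neg h]
          by_cases hA : preceq i a
          · rw [if_neg (fun hB => h ((hiff i).2 ⟨hA, hB⟩)), mul_zero]
          · rw [if_neg hA, zero_mul]
      apply Submodule.subset_span
      exact ⟨cm a, cm_mem_Ber n hn m r1 a hr1 hasupp,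
        cm b, cm_mem_Ber n hn m r2 b hr2 hbsupp, hprod⟩
    have he := eVec_mem _ hcm
    have htop : starProd (Ber n r1 m) (Ber n r2 m) = ⊤ := by
      rw [eq_top_iff]
      intro x _
      have hx : x = ∑ v, x v • eVec v := by
        funext i
        rw [Finset.sum_apply]
        have hcongr : ∀ v ∈ Finset.univ, (x v • eVec v) i = if i = v then x v else 0 := by
          intro v _
          by_cases h : i = v
          · subst h; simp [eVec]
          · simp [eVec, h]
        rw [Finset.sum_congr rfl hcongr, Finset.sum_ite_eq Finset.univ i x]
        simp
      rw [hx]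
      exact Submodule.sum_mem _ fun v _ => Submodule.smul_mem _ _ (he v)
    rw [htop]
    exact Submodule.top_coe
  · intro h
    have hbot : starProd (Ber n r1 m) (Ber n r2 m) = ⊥ := by
      apply le_bot_iff.1
      apply Submodule.span_le.2
      rintro x ⟨c, hc, d, hd, rfl⟩
      show c * d ∈ (⊥ : Submodule (ZMod 2) _)
      rw [Submodule.mem_bot]
      rcases h with h | h
      · have hc0 : c = 0 := Ber_sub_zero n m r1 (le_of_eq h.symm) c hc
        rw [hc0, zero_mul]
      · have hd0 : d = 0 := Ber_sub_zero n m r2 (le_of_eq h.symm) d hd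
        rw [hd0, mul_zero]
    rw [hbot]
    exact Submodule.bot_coe
end

section
/- For 1 ≤ r ≤ m, the Berman codes are nested: Ber_n^{r}(m) ⊆ Ber_n^{r−1}(m), and the Dual Berman codes are nested in the opposite direction: B_n^{r−1}(m) ⊆ B_n^{r}(m). -/
/-
By induction on `m`, `Ber_n^r(m)` is antitone and `B_n^r(m)` monotone in `r`: the recursive
description of a code with parameters `(r + 1, m + 1)` involves only the codes with parameters
`(r, m)` and `(r + 1, m)`, so the induction hypothesis applies blockwise. For `r = 0`, a word of
`Ber_n^1(m + 1)` has parity zero because each of its blocks lies in the parity-check code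
`Ber_n^0(m)`, and the constant word `a` of `B_n^0(m + 1)` lies in `B_n^1(m + 1)` with `u = a`
and all `u_l = 0`.
-/

open scoped BigOperators

theorem sum_fin_succ_pi {α M : Type*} [Fintype α] [AddCommMonoid M] (m : ℕ)
    (c : (Fin (m + 1) → α) → M) :
    ∑ i, c i = ∑ l : α, ∑ j : Fin m → α, c (Fin.cons l j) := by
  rw [← Fintype.sum_prod_type']
  exact (Fintype.sum_equiv (Fin.consEquiv fun _ => α) _ _ fun _ => rfl).symm

theorem sum_eq_zero_of_mem_Ber_zero {n m : ℕ} {c : (Fin m → Fin n) → ZMod 2}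
    (hc : c ∈ Ber n 0 m) : ∑ i, c i = 0 := by
  cases m with
  | zero => simp [show c = 0 from hc]
  | succ m => exact hc

theorem Ber_succ_subset (n : ℕ) : ∀ m r, Ber n (r + 1) m ⊆ Ber n r m
  | 0, _ => subset_rfl
  | m + 1, 0 => fun v hv => by
      change ∑ i, v i = 0
      rw [sum_fin_succ_pi]
      exact Finset.sum_eq_zero fun l _ => sum_eq_zero_of_mem_Ber_zero (hv.1 l)
  | m + 1, r + 1 => fun _ ⟨hblocks, hsum⟩ =>
      ⟨fun l => Ber_succ_subset n m r (hblocks l), Ber_succ_subset n m (r + 1) hsum⟩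

theorem Ber_antitone (n m : ℕ) : Antitone fun r => Ber n r m :=
  antitone_nat_of_succ_le (Ber_succ_subset n m)

theorem const_mem_DBer_zero (n m : ℕ) (a : ZMod 2) : (fun _ => a) ∈ DBer n 0 m := by
  cases m with
  | zero => trivial
  | succ m => exact ⟨a, rfl⟩

theorem DBer_subset_succ (n : ℕ) : ∀ m r, DBer n r m ⊆ DBer n (r + 1) m
  | 0, _ => subset_rfl
  | m + 1, 0 => by
      rintro _ ⟨a, rfl⟩
      refine ⟨fun _ => a, DBer_subset_succ n m 0 (const_mem_DBer_zero n m a), fun _ _ => 0,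
        fun _ => const_mem_DBer_zero n m 0, fun l => ?_⟩
      split_ifs <;> funext j <;> simp [blockAt]
  | m + 1, r + 1 => fun _ ⟨u, hu, w, hw, hblocks⟩ =>
      ⟨u, DBer_subset_succ n m (r + 1) hu, w, fun l => DBer_subset_succ n m r (hw l), hblocks⟩

theorem DBer_monotone (n m : ℕ) : Monotone fun r => DBer n r m :=
  monotone_nat_of_le_succ (DBer_subset_succ n m)

theorem stmt4_general (n m r : ℕ) :
    Ber n r m ⊆ Ber n (r - 1) m ∧ DBer n (r - 1) m ⊆ DBer n r m :=
  ⟨Ber_antitone n m (Nat.sub_le r 1), DBer_monotone n m (Nat.sub_le r 1)⟩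

/-- nesting. For `1 ≤ r ≤ m`, `Ber_n^r(m) ⊆ Ber_n^{r-1}(m)` and
`B_n^{r-1}(m) ⊆ B_n^r(m)`. -/
theorem stmt4 (n m r : ℕ) (hn : 2 ≤ n) (hr : 1 ≤ r) (hrm : r ≤ m) :
    Ber n r m ⊆ Ber n (r - 1) m ∧ DBer n (r - 1) m ⊆ DBer n r m :=
  stmt4_general n m r
end

section
/- For j, k ∈ H^m with wt(k) = 1, supp(k) ⊆ supp(j), and k agreeing with j on supp(k), the identity c_m(j) ⋆ d_m(k) = c_m(j) + c_m(j − k) holds in F_2^{n^m}, where ⋆ is the coordinatewise product. -/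
open scoped BigOperators

/-! If `k` has weight one, with support `{s₀}`, then `j - k` is `j` with coordinate `s₀` set to `0`,
and below `j` the tuples `⪰ k` are exactly those that are nonzero at `s₀`; so both sides of the
identity are the indicator of `{i ⪯ j : i s₀ ≠ 0}`, the right-hand side as
`[i ⪯ j] + [i ⪯ j ∧ i s₀ = 0]` over `𝔽₂`. -/

section Preceq

variable {n m : ℕ}

lemma exists_support_eq_singleton_of_tupleWt_eq_one {k : Fin m → Fin n} (h : tupleWt k = 1) :
    ∃ s₀, ∀ s, (k s).val ≠ 0 ↔ s = s₀ := by
  obtain ⟨s₀, hs₀⟩ := Finset.card_eq_one.mp h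
  exact ⟨s₀, fun s => by simpa using Finset.ext_iff.mp hs₀ s⟩

lemma preceq_update_zero_iff [NeZero n] {i j : Fin m → Fin n} {s₀ : Fin m} :
    preceq i (Function.update j s₀ 0) ↔ preceq i j ∧ i s₀ = 0 := by
  constructor
  · intro h
    have hi : i s₀ = 0 := by
      by_contra hne
      simpa [hne] using h s₀ (Fin.val_ne_zero_iff.mpr hne)
    refine ⟨fun s hs => ?_, hi⟩
    have hne : s ≠ s₀ := by rintro rfl; exact hs (by simp [hi])
    simpa [hne] using h s hs
  · rintro ⟨h, hi⟩ s hs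
    have hne : s ≠ s₀ := by rintro rfl; exact hs (by simp [hi])
    simpa [hne] using h s hs

lemma preceq_iff_ne_zero_of_support_eq_singleton [NeZero n] {i j k : Fin m → Fin n} {s₀ : Fin m}
    (hk : ∀ s, (k s).val ≠ 0 ↔ s = s₀) (hkj : preceq k j) (hij : preceq i j) :
    preceq k i ↔ i s₀ ≠ 0 := by
  have hks₀ : (k s₀).val ≠ 0 := (hk s₀).mpr rfl
  constructor
  · intro h
    rw [← h s₀ hks₀]
    exact Fin.val_ne_zero_iff.mp hks₀
  · intro hi s hs
    obtain rfl := (hk s).mp hs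
    rw [hkj s hs, hij s (Fin.val_ne_zero_iff.mpr hi)]

end Preceq

theorem stmt12_general (n m : ℕ) [NeZero n] (j k : Fin m → Fin n)
    (hwt : tupleWt k = 1) (hkj : preceq k j) :
    cm j * dm k = cm j + cm (fun s => if (k s).val ≠ 0 then 0 else j s) := by
  obtain ⟨s₀, hk⟩ := exists_support_eq_singleton_of_tupleWt_eq_one hwt
  have hsub : (fun s => if (k s).val ≠ 0 then 0 else j s) = Function.update j s₀ 0 := by
    funext s
    simp only [hk, Function.update_apply]
  rw [hsub]
  funext i
  simp only [Pi.mul_apply, Pi.add_apply, cm, dm, preceq_update_zero_iff]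
  by_cases hij : preceq i j
  · have hki := preceq_iff_ne_zero_of_support_eq_singleton hk hkj hij
    by_cases hi : i s₀ = 0
    · simp only [hij, hi, hki, ne_eq, not_true_eq_false, and_self, if_true, if_false]
      decide
    · simp [hij, hi, hki]
  · simp [hij]

/-- for `wt(k) = 1` with `k ⪯ j`,
`c_m(j) ⋆ d_m(k) = c_m(j) + c_m(j - k)`, where `j - k` zeroes out `j` on `supp(k)`. -/
theorem stmt12 (n m : ℕ) [NeZero n] (hn : 2 ≤ n) (j k : Fin m → Fin n)
    (hwt : tupleWt k = 1) (hkj : preceq k j) :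
    cm j * dm k = cm j + cm (fun s => if (k s).val ≠ 0 then 0 else j s) :=
  stmt12_general n m j k hwt hkj
end

section
/- For i, l ∈ H^m with all entries nonzero (wt(i) = wt(l) = m), the coordinatewise product c_m(i) ⋆ c_m(l) equals c_m(v), where v ∈ H^m is defined by v_s = i_s if i_s = l_s and v_s = 0 otherwise. -/
open scoped BigOperators

/-- for `i, l` with all entries nonzero, `c_m(i) ⋆ c_m(l) = c_m(v)` where
`v_s = i_s` if `i_s = l_s` and `v_s = 0` otherwise. -/
theorem stmt19 (n m : ℕ) [NeZero n] (i l : Fin m → Fin n)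
    (hi : tupleWt i = m) (hl : tupleWt l = m) :
    cm i * cm l = cm (fun s => if i s = l s then i s else 0) := by
  have key : ∀ j : Fin m → Fin n,
      preceq j (fun s => if i s = l s then i s else 0) ↔ preceq j i ∧ preceq j l := by
    intro j
    constructor
    · intro h
      constructor <;> intro s hs <;> have := h s hs <;> by_cases heq : i s = l s
      · simpa [heq] using this
      · simp [heq] at this
        exact absurd (congrArg Fin.val this) (by simpa using hs)
      · rw [← heq]; simpa [heq] using this
      · simp [heq] at this
        exact absurd (congrArg Fin.val this) (by simpa using hs)
    · rintro ⟨h1, h2⟩ s hs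
      have e1 := h1 s hs
      have e2 := h2 s hs
      simp [← e1, ← e2]
  funext j
  simp only [Pi.mul_apply, cm]
  by_cases h1 : preceq j i <;> by_cases h2 : preceq j l <;>
    simp [h1, h2, key j]
end
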